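/- If φ is an automorphism of NF_n with φ(e₁) = Σ_{i=1}^n α_i e_i (α₁ ≠ 0), then φ(e_j) = α₁^{j−1} Σ_{i=1}^{n+1−j} α_i e_{i+j−1} for all 2 ≤ j ≤ n. Consequently an automorphism of NF_n is uniquely determined by its value at e₁, and every 2-local automorphism of NF_n is an automorphism. -/

import Mathlib

/-- The bracket of the null-filiform Leibniz algebra `NF_n` on `Fin n → ℂ`:
`[e_i, e_1] = e_{i+1}` (0-indexed: `[e_i, e_0] = e_{i+1}`), all other basis products zero. -/
def nfMul (n : ℕ) (x y : Fin n → ℂ) : Fin n → ℂ :=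
  fun k =>
    if hk : (k : ℕ) = 0 then 0
    else x ⟨(k : ℕ) - 1, by have := k.isLt; omega⟩ * y ⟨0, by have := k.isLt; omega⟩

/-! Since `e_{j+1} = [e_j, e_1]`, a bracket-preserving map `ψ` satisfies
`ψ e_{j+1} = [ψ e_j, ψ e_1]`, and right multiplication by `y` shifts coordinates up by one and
scales them by `y_1`; by induction `ψ e_j` is `ψ e_1` shifted by `j - 1` places and scaled by
`(ψ e_1)_1^{j-1}`. So `ψ` is determined by `ψ e_1`. A 2-local automorphism `Δ` agrees at every pair
`e_1, x` with an automorphism, and all these automorphisms coincide since they agree at `e_1`. -/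

lemma exists_forall_eq_of_twoLocal {α β F : Type*} [FunLike F α β]
    (P : F → Prop) (e : α) (huniq : ∀ f g, P f → P g → f e = g e → ∀ x, f x = g x)
    (Δ : α → β) (hΔ : ∀ x y, ∃ f, P f ∧ f x = Δ x ∧ f y = Δ y) :
    ∃ f, P f ∧ ∀ x, Δ x = f x := by
  obtain ⟨f, hf, hfe, -⟩ := hΔ e e
  refine ⟨f, hf, fun x => ?_⟩
  obtain ⟨g, hg, hge, hgx⟩ := hΔ e x
  rw [← hgx]
  exact huniq g f hg hf (hge.trans hfe.symm) x

section NullFiliform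

variable {n : ℕ}

lemma nfMul_apply_zero (x y : Fin n → ℂ) (hn : 0 < n) : nfMul n x y ⟨0, hn⟩ = 0 := rfl

lemma nfMul_apply_succ (x y : Fin n → ℂ) (k : ℕ) (hk : k + 1 < n) :
    nfMul n x y ⟨k + 1, hk⟩ = x ⟨k, by omega⟩ * y ⟨0, by omega⟩ := rfl

lemma nfMul_single_single_zero (hn : 0 < n) (m : ℕ) (hm : m + 1 < n) :
    nfMul n (Pi.single (⟨m, by omega⟩ : Fin n) 1) (Pi.single (⟨0, hn⟩ : Fin n) 1) =
      Pi.single (⟨m + 1, hm⟩ : Fin n) 1 := by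
  funext ⟨k, hk⟩
  cases k with
  | zero => simp [nfMul_apply_zero]
  | succ k => simp [nfMul_apply_succ, Pi.single_apply]

lemma apply_single_of_map_nfMul (hn : 0 < n) (f : (Fin n → ℂ) → (Fin n → ℂ))
    (hf : ∀ x y, f (nfMul n x y) = nfMul n (f x) (f y)) (j k : Fin n) :
    f (Pi.single j 1) k =
      if (j : ℕ) ≤ k then
        f (Pi.single ⟨0, hn⟩ 1) ⟨0, hn⟩ ^ (j : ℕ) * f (Pi.single ⟨0, hn⟩ 1) ⟨k - j, by omega⟩
      else 0 := by
  obtain ⟨j, hj⟩ := j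
  induction j generalizing k with
  | zero => simp
  | succ j ih =>
    rw [← nfMul_single_single_zero hn j hj, hf]
    obtain ⟨_ | k, hk⟩ := k
    · simp [nfMul_apply_zero]
    · rw [nfMul_apply_succ, ih ⟨k, by omega⟩]
      by_cases hjk : j ≤ k
      · simp only [if_pos hjk, if_pos (by omega : j + 1 ≤ k + 1), Nat.add_sub_add_right, pow_succ]
        ring
      · simp [hjk]

lemma LinearMap.eq_of_map_nfMul_of_apply_single_zero_eq (hn : 0 < n)
    (f g : (Fin n → ℂ) →ₗ[ℂ] (Fin n → ℂ))
    (hf : ∀ x y, f (nfMul n x y) = nfMul n (f x) (f y))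
    (hg : ∀ x y, g (nfMul n x y) = nfMul n (g x) (g y))
    (h : f (Pi.single ⟨0, hn⟩ 1) = g (Pi.single ⟨0, hn⟩ 1)) : f = g := by
  refine (Pi.basisFun ℂ (Fin n)).ext fun j => funext fun k => ?_
  rw [Pi.basisFun_apply, apply_single_of_map_nfMul hn f hf, apply_single_of_map_nfMul hn g hg, h]

end NullFiliform

/-- If `φ` is an automorphism of `NF_n` with `φ(e₁) = ∑ αᵢ eᵢ` (`α₁ ≠ 0`), then
`φ(e_j) = α₁^{j-1} ∑_{i=1}^{n+1-j} α_i e_{i+j-1}` for `2 ≤ j ≤ n` (0-indexed below);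
consequently an automorphism is determined by its value at `e₁`, and every 2-local
automorphism of `NF_n` is an automorphism. -/
theorem stmt_10 (n : ℕ) (hn : 0 < n)
    (φ : (Fin n → ℂ) ≃ₗ[ℂ] (Fin n → ℂ))
    (hφ : ∀ x y : Fin n → ℂ, φ (nfMul n x y) = nfMul n (φ x) (φ y))
    (α : Fin n → ℂ)
    (hα : φ (Pi.single (⟨0, hn⟩ : Fin n) 1) = ∑ i : Fin n, α i • (Pi.single i 1 : Fin n → ℂ)) :
    (∀ j k : Fin n, 0 < (j : ℕ) →
      φ (Pi.single j 1) k =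
        if (j : ℕ) ≤ (k : ℕ) then
          α ⟨0, hn⟩ ^ (j : ℕ) * α ⟨(k : ℕ) - (j : ℕ), by have := k.isLt; omega⟩
        else 0) ∧
    (∀ ψ : (Fin n → ℂ) ≃ₗ[ℂ] (Fin n → ℂ),
      (∀ x y : Fin n → ℂ, ψ (nfMul n x y) = nfMul n (ψ x) (ψ y)) →
      ψ (Pi.single (⟨0, hn⟩ : Fin n) 1) = φ (Pi.single (⟨0, hn⟩ : Fin n) 1) →
      ∀ x : Fin n → ℂ, ψ x = φ x) ∧
    (∀ Δ : (Fin n → ℂ) → (Fin n → ℂ),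
      (∀ x y : Fin n → ℂ, ∃ ψ : (Fin n → ℂ) ≃ₗ[ℂ] (Fin n → ℂ),
        (∀ u v : Fin n → ℂ, ψ (nfMul n u v) = nfMul n (ψ u) (ψ v)) ∧
        ψ x = Δ x ∧ ψ y = Δ y) →
      ∃ ψ : (Fin n → ℂ) ≃ₗ[ℂ] (Fin n → ℂ),
        (∀ u v : Fin n → ℂ, ψ (nfMul n u v) = nfMul n (ψ u) (ψ v)) ∧
        ∀ x : Fin n → ℂ, Δ x = ψ x) := by
  have hφ₀ : φ (Pi.single ⟨0, hn⟩ 1) = α := by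
    funext i
    simp [hα, Finset.sum_apply, Pi.single_apply]
  have huniq : ∀ ψ χ : (Fin n → ℂ) ≃ₗ[ℂ] (Fin n → ℂ),
      (∀ x y, ψ (nfMul n x y) = nfMul n (ψ x) (ψ y)) →
      (∀ x y, χ (nfMul n x y) = nfMul n (χ x) (χ y)) →
      ψ (Pi.single ⟨0, hn⟩ 1) = χ (Pi.single ⟨0, hn⟩ 1) → ∀ x, ψ x = χ x :=
    fun ψ χ hψ hχ h x =>
      LinearMap.congr_fun
        (LinearMap.eq_of_map_nfMul_of_apply_single_zero_eq hn ψ.toLinearMap χ.toLinearMap hψ hχ h) x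
  refine ⟨fun j k _ => ?_, fun ψ hψ h => huniq ψ φ hψ hφ h, fun Δ hΔ => ?_⟩
  · rw [apply_single_of_map_nfMul hn φ hφ, hφ₀]
  · exact exists_forall_eq_of_twoLocal _ _ huniq Δ hΔ
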